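/- If a node of the tree representation of a saturated structure S has degree d ≥ 2c+1 over an alphabet with c complementary pairs, then for every sequence w compatible with S, two of the d relevant positions carry the same letter, and swapping their partners yields an alternative structure with the same number of base pairs; hence S has no design. -/

import Mathlib

open scoped Classical

/-- An RNA nucleotide. -/
inductive Base | A | U | C | G
deriving DecidableEq, Inhabited, Repr

/-- The Watson-Crick pairing relation (only G-C and A-U pairs allowed). -/
def wcPair : Base → Base → Prop
  | .G, .C => True | .C, .G => True
  | .A, .U => True | .U, .A => True
  | _, _ => False

/-- The Nussinov-Jacobson pairing relation (G-C, A-U and G-U pairs allowed). -/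
def njPair : Base → Base → Prop
  | .G, .C => True | .C, .G => True
  | .A, .U => True | .U, .A => True
  | .G, .U => True | .U, .G => True
  | _, _ => False

/-- An RNA (pseudoknot-free) secondary structure, 0-indexed positions. -/
structure SecStr where
  len : ℕ
  pairs : Finset (ℕ × ℕ)
  lt : ∀ p ∈ pairs, p.1 < p.2
  ub : ∀ p ∈ pairs, p.2 < len
  once : ∀ p ∈ pairs, ∀ q ∈ pairs, p ≠ q →
    p.1 ≠ q.1 ∧ p.1 ≠ q.2 ∧ p.2 ≠ q.1 ∧ p.2 ≠ q.2
  noncross : ∀ p ∈ pairs, ∀ q ∈ pairs,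
    ¬ (p.1 < q.1 ∧ q.1 < p.2 ∧ p.2 < q.2)

def SecStr.pairedAt (S : SecStr) (i : ℕ) : Prop := ∃ p ∈ S.pairs, p.1 = i ∨ p.2 = i
def SecStr.unpairedAt (S : SecStr) (i : ℕ) : Prop := i < S.len ∧ ¬ S.pairedAt i
def SecStr.saturated (S : SecStr) : Prop := ∀ i < S.len, S.pairedAt i

/-- A structure is compatible with a sequence `w` (w.r.t. pairing relation `R`)
if it has the right length and all base pairs are `R`-valid. -/
def compat {α : Type*} [Inhabited α] (R : α → α → Prop) (w : List α) (S : SecStr) : Prop :=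
  S.len = w.length ∧ ∀ p ∈ S.pairs, R (w.getD p.1 default) (w.getD p.2 default)

/-- Base-pair-sum free energy of a structure on a sequence. -/
noncomputable def energy {α : Type*} [Inhabited α] (E : α → α → ℝ) (w : List α)
    (S : SecStr) : ℝ :=
  ∑ p ∈ S.pairs, E (w.getD p.1 default) (w.getD p.2 default)

/-- `w` is a Δ-design for `S`: `S` is compatible with `w`, and every other
compatible structure has energy at least `energy E w S + Δ`. -/
def isDesign {α : Type*} [Inhabited α] (R : α → α → Prop) (E : α → α → ℝ) (Δ : ℝ)
    (w : List α) (S : SecStr) : Prop :=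
  compat R w S ∧ ∀ S' : SecStr, compat R w S' → S' ≠ S →
    energy E w S' ≥ energy E w S + Δ

/- Tree representation machinery. -/
def encloses (q p : ℕ × ℕ) : Prop := q.1 < p.1 ∧ p.2 < q.2
def SecStr.hasParent (S : SecStr) (p : ℕ × ℕ) : Prop := ∃ q ∈ S.pairs, encloses q p
def SecStr.isParentOf (S : SecStr) (q p : ℕ × ℕ) : Prop :=
  q ∈ S.pairs ∧ p ∈ S.pairs ∧ encloses q p ∧ ¬ ∃ m ∈ S.pairs, encloses q m ∧ encloses m p

/-- Degree of a paired node: number of paired children plus one for the parent (if any). -/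
noncomputable def SecStr.pairDeg (S : SecStr) (p : ℕ × ℕ) : ℕ :=
  (S.pairs.filter (fun c => S.isParentOf p c)).card + (if S.hasParent p then 1 else 0)
/-- Degree of the virtual root: number of top-level base pairs. -/
noncomputable def SecStr.rootDeg (S : SecStr) : ℕ :=
  (S.pairs.filter (fun p => ¬ S.hasParent p)).card
/-- All nodes of the tree representation (including the virtual root) have degree ≤ d. -/
def SecStr.degLE (S : SecStr) (d : ℕ) : Prop :=
  S.rootDeg ≤ d ∧ ∀ p ∈ S.pairs, S.pairDeg p ≤ d

/-- A sequence is saturable if a saturated structure is compatible with it. -/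
def saturable {α : Type*} [Inhabited α] (R : α → α → Prop) (w : List α) : Prop :=
  ∃ S : SecStr, compat R w S ∧ S.saturated
/-- Atomic saturable: saturable, and no (nonempty) proper prefix is saturable. -/
def atomicSaturable {α : Type*} [Inhabited α] (R : α → α → Prop) (w : List α) : Prop :=
  saturable R w ∧ ∀ k, 0 < k → k < w.length → ¬ saturable R (w.take k)

/- Motifs. -/
def SecStr.unpChildOfPair (S : SecStr) (q : ℕ × ℕ) (u : ℕ) : Prop :=
  S.unpairedAt u ∧ q.1 < u ∧ u < q.2 ∧
    ¬ ∃ m ∈ S.pairs, q.1 < m.1 ∧ m.1 < u ∧ u < m.2 ∧ m.2 < q.2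
def SecStr.unpChildOfRoot (S : SecStr) (u : ℕ) : Prop :=
  S.unpairedAt u ∧ ¬ ∃ m ∈ S.pairs, m.1 < u ∧ u < m.2
/-- Motif m₅ : a tree node (possibly the root) of degree greater than four. -/
def hasM5 (S : SecStr) : Prop := 4 < S.rootDeg ∨ ∃ p ∈ S.pairs, 4 < S.pairDeg p
/-- Motif m₃∘ : a node with an unpaired child and degree greater than two. -/
def hasM3o (S : SecStr) : Prop :=
  (∃ q ∈ S.pairs, (∃ u, S.unpChildOfPair q u) ∧ 2 < S.pairDeg q) ∨
  ((∃ u, S.unpChildOfRoot u) ∧ 2 < S.rootDeg)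

/- Colorings of the tree representation. -/
inductive Col | black | white | gray
deriving DecidableEq

noncomputable def childCount (S : SecStr) (col : ℕ × ℕ → Col) (q : ℕ × ℕ) (c : Col) : ℕ :=
  (S.pairs.filter (fun p => S.isParentOf q p ∧ col p = c)).card
noncomputable def rootChildCount (S : SecStr) (col : ℕ × ℕ → Col) (c : Col) : ℕ :=
  (S.pairs.filter (fun p => ¬ S.hasParent p ∧ col p = c)).card

/-- A proper coloring of the tree representation. -/
def properCol (S : SecStr) (col : ℕ × ℕ → Col) : Prop :=
  rootChildCount S col .black ≤ 1 ∧ rootChildCount S col .white ≤ 1 ∧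
  rootChildCount S col .gray ≤ 2 ∧
  ∀ q ∈ S.pairs,
    childCount S col q .black ≤ 1 ∧ childCount S col q .white ≤ 1 ∧
    childCount S col q .gray ≤ 2 ∧
    childCount S col q (col q) ≤ 1 ∧
    (col q = .black → ∀ p ∈ S.pairs, S.isParentOf q p → col p ≠ .white) ∧
    (col q = .white → ∀ p ∈ S.pairs, S.isParentOf q p → col p ≠ .black)

/-- Level of a paired node: #black minus #white on the path to the root (incl. itself). -/
noncomputable def pairLvl (S : SecStr) (col : ℕ × ℕ → Col) (p : ℕ × ℕ) : ℤ :=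
  ((S.pairs.filter (fun q => q.1 ≤ p.1 ∧ p.2 ≤ q.2 ∧ col q = .black)).card : ℤ) -
  ((S.pairs.filter (fun q => q.1 ≤ p.1 ∧ p.2 ≤ q.2 ∧ col q = .white)).card : ℤ)
/-- Level of an unpaired node. -/
noncomputable def unpLvl (S : SecStr) (col : ℕ × ℕ → Col) (u : ℕ) : ℤ :=
  ((S.pairs.filter (fun q => q.1 < u ∧ u < q.2 ∧ col q = .black)).card : ℤ) -
  ((S.pairs.filter (fun q => q.1 < u ∧ u < q.2 ∧ col q = .white)).card : ℤ)

/-- Separated coloring: gray-node levels and unpaired-node levels are disjoint. -/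
def separatedCol (S : SecStr) (col : ℕ × ℕ → Col) : Prop :=
  ∀ p ∈ S.pairs, col p = .gray → ∀ u, S.unpairedAt u →
    pairLvl S col p ≠ unpLvl S col u

/-- A bipartite energy model: its compatibility graph is bipartite. -/
def Bipartite {α : Type*} (R : α → α → Prop) : Prop :=
  ∃ f : α → Bool, ∀ a b, R a b → f a ≠ f b

/-- The k-stutter of a sequence. -/
def stutterSeq {α : Type*} (w : List α) (k : ℕ) : List α :=
  w.flatMap (fun a => List.replicate k a)
/-- The base pairs of the k-stutter of a structure. -/
def stutterPairs (S : SecStr) (k : ℕ) : Finset (ℕ × ℕ) :=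
  S.pairs.biUnion (fun p => (Finset.range k).image
    (fun m => (k * p.1 + m, k * p.2 + (k - 1 - m))))

/-- Two base pairs belong to the same band (maximal stack) of S. -/
def sameBand (S : SecStr) (p p' : ℕ × ℕ) : Prop :=
  p ∈ S.pairs ∧ p' ∈ S.pairs ∧ p.1 + p.2 = p'.1 + p'.2 ∧
  ∀ x, min p.1 p'.1 ≤ x → x ≤ max p.1 p'.1 → (x, p.1 + p.2 - x) ∈ S.pairs

/-- Nussinov-Jacobson energies: a for G-C, b for A-U, g for G-U. -/
def njE (a b g : ℝ) : Base → Base → ℝ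
  | .G, .C => a | .C, .G => a
  | .A, .U => b | .U, .A => b
  | .G, .U => g | .U, .G => g
  | _, _ => 0

/-- level of position i : #G minus #C in the prefix of w ending at i. -/
def lvl (w : List Base) (i : ℕ) : ℤ :=
  ((w.take (i+1)).count Base.G : ℤ) - ((w.take (i+1)).count Base.C : ℤ)

/-! A node of degree `d` comes with at least `d` positions: the left ends of its child arcs
and, for a paired node `(a, b)`, the position `b`. With more positions than letters, two of them
carry the same letter, and exchanging their partners keeps the structure compatible because the
pairing relation is symmetric. Two sibling arcs `(a, b), (c, d)` become the nested arcs
`(a, d), (b, c)`; a parent `(a, d)` and its child `(b, c)` become the siblings `(a, b), (c, d)`.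
No other arc separates `a, b, c, d`, so the result is again non-crossing. It has as many base
pairs as `S`, hence the same energy under the constant energy model `-1`, which rules out a
design with gap `1`. -/

def ArcsCompatible (r s : ℕ × ℕ) : Prop :=
  (r.1 ≠ s.1 ∧ r.1 ≠ s.2 ∧ r.2 ≠ s.1 ∧ r.2 ≠ s.2) ∧
    ¬ (r.1 < s.1 ∧ s.1 < r.2 ∧ r.2 < s.2) ∧ ¬ (s.1 < r.1 ∧ r.1 < s.2 ∧ s.2 < r.2)

instance : Std.Symm ArcsCompatible :=
  ⟨fun _ _ ⟨hne, h₁, h₂⟩ => ⟨⟨hne.1.symm, hne.2.2.1.symm, hne.2.1.symm, hne.2.2.2.symm⟩, h₂, h₁⟩⟩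

theorem Finset.card_insert_insert_erase_erase {α : Type*} [DecidableEq α] {s : Finset α}
    {p q a b : α} (hp : p ∈ s) (hq : q ∈ s) (hpq : p ≠ q) (ha : a ∉ s) (hb : b ∉ s)
    (hab : a ≠ b) : (insert a (insert b ((s.erase p).erase q))).card = s.card := by
  have hq' : q ∈ s.erase p := Finset.mem_erase.mpr ⟨hpq.symm, hq⟩
  rw [Finset.card_insert_of_notMem, Finset.card_insert_of_notMem, Finset.card_erase_add_one hq',
    Finset.card_erase_add_one hp]
  · exact fun h => hb (Finset.mem_of_mem_erase (Finset.mem_of_mem_erase h))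
  · simp only [Finset.mem_insert, Finset.mem_erase, not_or]
    exact ⟨hab, fun h => ha h.2.2⟩

namespace SecStr

def ofPairwise (len : ℕ) (P : Finset (ℕ × ℕ)) (hlt : ∀ p ∈ P, p.1 < p.2)
    (hub : ∀ p ∈ P, p.2 < len) (hP : (P : Set (ℕ × ℕ)).Pairwise ArcsCompatible) : SecStr where
  len := len
  pairs := P
  lt := hlt
  ub := hub
  once _ hp _ hq hpq := (hP hp hq hpq).1
  noncross p hp q hq := by
    by_cases hpq : p = q
    · subst hpq; omega
    · exact (hP hp hq hpq).2.1

variable (S : SecStr)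

theorem pairwise_arcsCompatible : (S.pairs : Set (ℕ × ℕ)).Pairwise ArcsCompatible :=
  fun _ hp _ hq hpq => ⟨S.once _ hp _ hq hpq, S.noncross _ hp _ hq, S.noncross _ hq _ hp⟩

theorem disjoint_or_nested {p q : ℕ × ℕ} (hp : p ∈ S.pairs) (hq : q ∈ S.pairs) (hpq : p ≠ q) :
    p.2 < q.1 ∨ q.2 < p.1 ∨ encloses p q ∨ encloses q p := by
  have := S.lt p hp
  have := S.lt q hq
  have := S.once p hp q hq hpq
  have := S.noncross p hp q hq
  have := S.noncross q hq p hp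
  unfold encloses
  omega

theorem exists_replace {p q n₁ n₂ : ℕ × ℕ} (hp : p ∈ S.pairs) (hq : q ∈ S.pairs) (hpq : p ≠ q)
    (hn : ∀ n ∈ [n₁, n₂], n.1 < n.2 ∧ n.2 < S.len ∧ n ∉ S.pairs)
    (h₁₂ : n₁ ≠ n₂ ∧ ArcsCompatible n₁ n₂)
    (hcompat : ∀ m ∈ S.pairs, m ≠ p → m ≠ q → ∀ n ∈ [n₁, n₂], ArcsCompatible m n) :
    ∃ S' : SecStr, S'.len = S.len ∧
      S'.pairs = insert n₁ (insert n₂ ((S.pairs.erase p).erase q)) ∧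
      S' ≠ S ∧ S'.pairs.card = S.pairs.card := by
  simp only [List.mem_cons, List.not_mem_nil, or_false, forall_eq_or_imp, forall_eq] at hn hcompat
  set rest := (S.pairs.erase p).erase q
  have hrest : ∀ m ∈ rest, m ∈ S.pairs ∧ m ≠ p ∧ m ≠ q := fun m hm => by
    simp only [rest, Finset.mem_erase] at hm
    exact ⟨hm.2.2, hm.2.1, hm.1⟩
  have hP : ((insert n₁ (insert n₂ rest) : Finset (ℕ × ℕ)) : Set (ℕ × ℕ)).Pairwise
      ArcsCompatible := by
    simp only [Finset.coe_insert, Set.pairwise_insert_of_symm, Set.mem_insert_iff, Finset.mem_coe]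
    refine ⟨⟨S.pairwise_arcsCompatible.mono fun m hm => (hrest m hm).1, fun m hm _ => ?_⟩, ?_⟩
    · obtain ⟨hm, hmp, hmq⟩ := hrest m hm
      exact Std.Symm.symm _ _ (hcompat m hm hmp hmq).2
    · rintro m (rfl | hm) -
      · exact h₁₂.2
      · obtain ⟨hm, hmp, hmq⟩ := hrest m hm
        exact Std.Symm.symm _ _ (hcompat m hm hmp hmq).1
  refine ⟨ofPairwise S.len _ ?_ ?_ hP, rfl, rfl, fun h => hn.1.2.2 ?_,
    Finset.card_insert_insert_erase_erase hp hq hpq hn.1.2.2 hn.2.2.2 h₁₂.1⟩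
  · simp only [Finset.mem_insert, forall_eq_or_imp]
    exact ⟨hn.1.1, hn.2.1, fun m hm => S.lt m (hrest m hm).1⟩
  · simp only [Finset.mem_insert, forall_eq_or_imp]
    exact ⟨hn.1.2.1, hn.2.2.1, fun m hm => S.ub m (hrest m hm).1⟩
  · rw [← h]
    exact Finset.mem_insert_self _ _

/-- Two arcs on the positions `a < b < c < d` that no other arc separates can be exchanged for
the other non-crossing matching of these four positions. -/
theorem exists_rematch {a b c d : ℕ} (hab : a < b) (hbc : b < c) (hcd : c < d)
    {p q n₁ n₂ : ℕ × ℕ} (hp : p ∈ S.pairs) (hq : q ∈ S.pairs)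
    (hmatch : p = (a, b) ∧ q = (c, d) ∧ n₁ = (a, d) ∧ n₂ = (b, c) ∨
      p = (a, d) ∧ q = (b, c) ∧ n₁ = (a, b) ∧ n₂ = (c, d))
    (hfree : ∀ m ∈ S.pairs, m ≠ p → m ≠ q →
      {a, b, c, d} ⊆ Set.Ioo m.1 m.2 ∨ Disjoint {a, b, c, d} (Set.Ioo m.1 m.2)) :
    ∃ S' : SecStr, S'.len = S.len ∧
      S'.pairs = insert n₁ (insert n₂ ((S.pairs.erase p).erase q)) ∧
      S' ≠ S ∧ S'.pairs.card = S.pairs.card := by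
  have hcompat : ∀ m ∈ S.pairs, m ≠ p → m ≠ q → ∀ n ∈ [n₁, n₂], ArcsCompatible m n := by
    intro m hm hmp hmq n hn
    have := S.lt m hm
    have := S.once m hm p hp hmp
    have := S.once m hm q hq hmq
    have hsep := hfree m hm hmp hmq
    simp only [Set.insert_subset_iff, Set.singleton_subset_iff, Set.disjoint_insert_left,
      Set.disjoint_singleton_left, Set.mem_Ioo] at hsep
    simp only [List.mem_cons, List.not_mem_nil, or_false] at hn
    unfold ArcsCompatible
    rcases hmatch with ⟨rfl, rfl, rfl, rfl⟩ | ⟨rfl, rfl, rfl, rfl⟩ <;> rcases hn with rfl | rfl <;>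
      simp only at * <;> omega
  have hn : ∀ n ∈ [n₁, n₂], n.1 < n.2 ∧ n.2 < S.len ∧ n ∉ S.pairs := by
    intro n hn
    have := S.ub p hp
    have := S.ub q hq
    have hne : n ≠ p ∧ n ≠ q ∧ n.1 < n.2 ∧ n.2 < S.len := by
      simp only [List.mem_cons, List.not_mem_nil, or_false] at hn
      rcases hmatch with ⟨rfl, rfl, rfl, rfl⟩ | ⟨rfl, rfl, rfl, rfl⟩ <;> rcases hn with rfl | rfl <;>
        simp only [ne_eq, Prod.mk.injEq] at * <;> omega
    exact ⟨hne.2.2.1, hne.2.2.2, fun h => (hcompat n h hne.1 hne.2.1 n hn).1.1 rfl⟩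
  have hpq : p ≠ q ∧ n₁ ≠ n₂ ∧ ArcsCompatible n₁ n₂ := by
    unfold ArcsCompatible
    rcases hmatch with ⟨rfl, rfl, rfl, rfl⟩ | ⟨rfl, rfl, rfl, rfl⟩ <;>
      simp only [ne_eq, Prod.mk.injEq] <;> omega
  exact S.exists_replace hp hq hpq.1 hn hpq.2 hcompat

theorem encloses_iff_of_isParentOf {v p q m : ℕ × ℕ} (hvp : S.isParentOf v p)
    (hvq : S.isParentOf v q) (hm : m ∈ S.pairs) : encloses m p ↔ encloses m q := by
  have key : ∀ {p q}, S.isParentOf v p → S.isParentOf v q → encloses m p → encloses m q := by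
    rintro p q ⟨hv, hp, hvp, hnp⟩ ⟨-, hq, hvq, -⟩ hmp
    have := S.lt p hp
    have := S.lt q hq
    by_cases hmv : m = v
    · exact hmv ▸ hvq
    by_cases hvm : encloses v m
    · exact absurd ⟨m, hm, hvm, hmp⟩ hnp
    have := S.disjoint_or_nested hm hv hmv
    unfold encloses at *
    omega
  exact ⟨key hvp hvq, key hvq hvp⟩

end SecStr

theorem energy_const {α : Type*} [Inhabited α] (e : ℝ) (w : List α) (S : SecStr) :
    energy (fun _ _ => e) w S = S.pairs.card * e := by
  simp [energy]

section Rematch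

variable {α : Type*} [Inhabited α] {R : α → α → Prop} {w : List α} {S : SecStr}

theorem compat_of_rematch {S' : SecStr} {p q n₁ n₂ : ℕ × ℕ} (hw : compat R w S)
    (hlen : S'.len = S.len) (hpairs : S'.pairs = insert n₁ (insert n₂ ((S.pairs.erase p).erase q)))
    (h₁ : R (w.getD n₁.1 default) (w.getD n₁.2 default))
    (h₂ : R (w.getD n₂.1 default) (w.getD n₂.2 default)) : compat R w S' := by
  refine ⟨hlen.trans hw.1, ?_⟩
  rw [hpairs]
  simp only [Finset.mem_insert, forall_eq_or_imp]
  exact ⟨h₁, h₂, fun r hr => hw.2 r (Finset.mem_of_mem_erase (Finset.mem_of_mem_erase hr))⟩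

variable [Std.Symm R]

theorem exists_rematch_of_siblings (hw : compat R w S) {p q : ℕ × ℕ}
    (hp : p ∈ S.pairs) (hq : q ∈ S.pairs) (hpq : p ≠ q)
    (hsib : ∀ m ∈ S.pairs, encloses m p ↔ encloses m q)
    (hlet : w.getD p.1 default = w.getD q.1 default) :
    ∃ S' : SecStr, compat R w S' ∧ S' ≠ S ∧ S'.pairs.card = S.pairs.card := by
  wlog hord : p.2 < q.1 generalizing p q with H
  · have := S.lt p hp
    have := S.lt q hq
    have := S.disjoint_or_nested hp hq hpq
    have hpp := hsib p hp
    have hqq := hsib q hq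
    unfold encloses at *
    exact H hq hp hpq.symm (fun m hm => (hsib m hm).symm) hlet.symm (by omega)
  obtain ⟨S', hlen, hpairs, hne, hcard⟩ := S.exists_rematch (S.lt p hp) hord (S.lt q hq) hp hq
    (n₁ := (p.1, q.2)) (n₂ := (p.2, q.1)) (Or.inl ⟨rfl, rfl, rfl, rfl⟩)
    fun m hm hmp hmq => by
      have := S.lt m hm
      have := S.disjoint_or_nested hm hp hmp
      have := S.disjoint_or_nested hm hq hmq
      have := hsib m hm
      have := S.lt p hp
      have := S.lt q hq
      simp only [Set.insert_subset_iff, Set.singleton_subset_iff, Set.disjoint_insert_left,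
        Set.disjoint_singleton_left, Set.mem_Ioo]
      unfold encloses at *
      omega
  refine ⟨S', compat_of_rematch hw hlen hpairs ?_ ?_, hne, hcard⟩
  · simpa only [hlet] using hw.2 q hq
  · simpa only [hlet] using Std.Symm.symm _ _ (hw.2 p hp)

theorem exists_rematch_of_isParentOf (hw : compat R w S) {v r : ℕ × ℕ}
    (hvr : S.isParentOf v r) (hlet : w.getD r.1 default = w.getD v.2 default) :
    ∃ S' : SecStr, compat R w S' ∧ S' ≠ S ∧ S'.pairs.card = S.pairs.card := by
  obtain ⟨hv, hr, ⟨hvr₁, hvr₂⟩, hmid⟩ := hvr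
  obtain ⟨S', hlen, hpairs, hne, hcard⟩ := S.exists_rematch hvr₁ (S.lt r hr) hvr₂ hv hr
    (n₁ := (v.1, r.1)) (n₂ := (r.2, v.2)) (Or.inr ⟨rfl, rfl, rfl, rfl⟩)
    fun m hm hmv hmr => by
      have := S.lt m hm
      have := S.disjoint_or_nested hm hv hmv
      have := S.disjoint_or_nested hm hr hmr
      have : ¬ (encloses v m ∧ encloses m r) := fun h => hmid ⟨m, hm, h⟩
      simp only [Set.insert_subset_iff, Set.singleton_subset_iff, Set.disjoint_insert_left,
        Set.disjoint_singleton_left, Set.mem_Ioo]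
      have := S.lt r hr
      unfold encloses at *
      omega
  refine ⟨S', compat_of_rematch hw hlen hpairs ?_ ?_, hne, hcard⟩
  · simpa only [hlet] using hw.2 v hv
  · simpa only [hlet] using Std.Symm.symm _ _ (hw.2 r hr)

theorem exists_rematch_of_card_lt_siblings (hw : compat R w S)
    {T : Finset (ℕ × ℕ)} (hT : T ⊆ S.pairs)
    (hsib : ∀ p ∈ T, ∀ q ∈ T, ∀ m ∈ S.pairs, encloses m p ↔ encloses m q)
    {L : Finset α} (hL : ∀ p ∈ T, w.getD p.1 default ∈ L) (hcard : L.card < T.card) :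
    ∃ S' : SecStr, compat R w S' ∧ S' ≠ S ∧ S'.pairs.card = S.pairs.card := by
  obtain ⟨p, hp, q, hq, hpq, hlet⟩ := Finset.exists_ne_map_eq_of_card_lt_of_maps_to hcard hL
  exact exists_rematch_of_siblings hw (hT hp) (hT hq) hpq
    (hsib p hp q hq) hlet

variable [Fintype α]

theorem exists_rematch_of_card_lt_rootDeg (hw : compat R w S)
    (hdeg : Fintype.card α < S.rootDeg) :
    ∃ S' : SecStr, compat R w S' ∧ S' ≠ S ∧ S'.pairs.card = S.pairs.card :=
  exists_rematch_of_card_lt_siblings hw (T := S.pairs.filter fun p => ¬ S.hasParent p)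
    (Finset.filter_subset _ _)
    (fun _ hp _ hq m hm =>
      iff_of_false (fun h => (Finset.mem_filter.mp hp).2 ⟨m, hm, h⟩)
        (fun h => (Finset.mem_filter.mp hq).2 ⟨m, hm, h⟩))
    (fun _ _ => Finset.mem_univ _) hdeg

theorem exists_rematch_of_card_lt_pairDeg (hw : compat R w S)
    {v : ℕ × ℕ} (hdeg : Fintype.card α < S.pairDeg v) :
    ∃ S' : SecStr, compat R w S' ∧ S' ≠ S ∧ S'.pairs.card = S.pairs.card := by
  set C := S.pairs.filter (fun r => S.isParentOf v r)
  have hchild : ∀ r ∈ C, S.isParentOf v r := fun r hr => (Finset.mem_filter.mp hr).2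
  by_cases hpar : ∃ r ∈ C, w.getD r.1 default = w.getD v.2 default
  · obtain ⟨r, hr, hlet⟩ := hpar
    exact exists_rematch_of_isParentOf hw (hchild r hr) hlet
  · push Not at hpar
    have hdegC : S.pairDeg v ≤ C.card + 1 := Nat.add_le_add le_rfl (by split_ifs <;> simp)
    refine exists_rematch_of_card_lt_siblings hw (Finset.filter_subset _ _)
      (fun p hp q hq _ => S.encloses_iff_of_isParentOf (hchild p hp) (hchild q hq))
      (L := Finset.univ.erase (w.getD v.2 default))
      (fun r hr => Finset.mem_erase.mpr ⟨hpar r hr, Finset.mem_univ _⟩) ?_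
    calc (Finset.univ.erase _).card < Fintype.card α :=
          Finset.card_erase_lt_of_mem (Finset.mem_univ _)
      _ ≤ C.card := by omega

theorem exists_rematch_of_not_degLE (hw : compat R w S)
    (hdeg : ¬ S.degLE (Fintype.card α)) :
    ∃ S' : SecStr, compat R w S' ∧ S' ≠ S ∧ S'.pairs.card = S.pairs.card := by
  unfold SecStr.degLE at hdeg
  by_cases hroot : S.rootDeg ≤ Fintype.card α
  · push Not at hdeg
    obtain ⟨v, -, hv⟩ := hdeg hroot
    exact exists_rematch_of_card_lt_pairDeg hw hv
  · exact exists_rematch_of_card_lt_rootDeg hw (not_le.mp hroot)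

end Rematch

/-- if a node of a saturated structure has degree ≥ 2c+1 over an
alphabet with c complementary pairs, then every compatible sequence admits an
alternative structure with the same number of base pairs; hence S has no design. -/
theorem stmt11 (c : ℕ) (hc : 0 < c) (S : SecStr)
    (hdeg : ¬ S.degLE (2 * c)) :
    (∀ w : List (Fin (2 * c)),
        @compat (Fin (2 * c)) ⟨⟨0, by omega⟩⟩
          (fun x y => x.val / 2 = y.val / 2 ∧ x ≠ y) w S →
        ∃ S' : SecStr,
          @compat (Fin (2 * c)) ⟨⟨0, by omega⟩⟩
            (fun x y => x.val / 2 = y.val / 2 ∧ x ≠ y) w S' ∧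
          S' ≠ S ∧ S'.pairs.card = S.pairs.card)
    ∧ ¬ ∃ w : List (Fin (2 * c)),
        @isDesign (Fin (2 * c)) ⟨⟨0, by omega⟩⟩
          (fun x y => x.val / 2 = y.val / 2 ∧ x ≠ y)
          (fun _ _ => (-1 : ℝ)) 1 w S := by
  let : Inhabited (Fin (2 * c)) := ⟨⟨0, by omega⟩⟩
  have : Std.Symm fun x y : Fin (2 * c) => x.val / 2 = y.val / 2 ∧ x ≠ y :=
    ⟨fun _ _ h => ⟨h.1.symm, h.2.symm⟩⟩
  have hdeg' : ¬ S.degLE (Fintype.card (Fin (2 * c))) := by rwa [Fintype.card_fin]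
  refine ⟨fun w hw => exists_rematch_of_not_degLE hw hdeg', ?_⟩
  rintro ⟨w, hw, hgap⟩
  obtain ⟨S', hw', hne, hcard⟩ := exists_rematch_of_not_degLE hw hdeg'
  have := hgap S' hw' hne
  rw [energy_const, energy_const, hcard] at this
  linarith
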